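/- The Nijenhuis tensor N vanishes identically (J is integrable, class W₃⊕W₄, i.e. (J,⟨·,·⟩) is Hermitian) if and only if w₀ = 0 and D∘J' = J'∘D. -/

import Mathlib

open scoped BigOperators
open Matrix

noncomputable section

/-- The underlying `2n`-dimensional real vector space `ℝ^{2n}`, whose standard basis
plays the role of the orthonormal basis `e₀, e₁, …, e_{2n-1}`. -/
abbrev G (n : ℕ) := Fin (2*n) → ℝ

/-- The inner product `⟨·,·⟩` making the standard basis orthonormal. -/
def inn {n : ℕ} (x y : G n) : ℝ := ∑ i, x i * y i

/-- The standard basis vector `e k` (indexed by a natural number `k`). -/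
def E (n : ℕ) (k : ℕ) : G n := fun i => if (i : ℕ) = k then 1 else 0

/-- Membership in `a = span{e₂, …, e_{2n-1}}`. -/
def inA {n : ℕ} (x : G n) : Prop := ∀ i : Fin (2*n), (i : ℕ) < 2 → x i = 0

/-- The orthogonal almost complex structure `J e_{2i} = e_{2i+1}`, `J e_{2i+1} = -e_{2i}`. -/
def Jm (n : ℕ) : Matrix (Fin (2*n)) (Fin (2*n)) ℝ :=
  Matrix.of fun k l =>
    if (k : ℕ) = (l : ℕ) + 1 ∧ Even (l : ℕ) then (1 : ℝ)
    else if (l : ℕ) = (k : ℕ) + 1 ∧ Even (k : ℕ) then -1 else 0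

/-- `D` is (the extension by zero of) an endomorphism of `a`: it vanishes on
`span{e₀, e₁}` and takes values orthogonal to `span{e₀, e₁}`. -/
def DinA {n : ℕ} (D : Matrix (Fin (2*n)) (Fin (2*n)) ℝ) : Prop :=
  ∀ k l : Fin (2*n), ((k : ℕ) < 2 ∨ (l : ℕ) < 2) → D k l = 0

/-- The matrix of `L` determined by the data `μ, v₀, w₀, D`, i.e.
`L e₀ = 0`, `L e₁ = μ e₁ + v₀` and `L x = ⟨w₀, x⟩ e₁ + D x` for `x ∈ a`
(for `v₀, w₀ ∈ a` and `D` an endomorphism of `a`). -/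
def Lm {n : ℕ} (μ : ℝ) (v₀ w₀ : G n) (D : Matrix (Fin (2*n)) (Fin (2*n)) ℝ) :
    Matrix (Fin (2*n)) (Fin (2*n)) ℝ :=
  Matrix.of fun k l =>
    (if (k : ℕ) = 1 ∧ (l : ℕ) = 1 then μ else 0)
      + (if (l : ℕ) = 1 then v₀ k else 0)
      + (if (k : ℕ) = 1 then w₀ l else 0)
      + D k l

/-- The Lie bracket of the almost abelian Lie algebra `g = ℝ e₀ ⋉_L u`:
`[e₀, u] = L u` for `u ∈ u = span{e₁, …, e_{2n-1}}` and `[u, v] = 0` for `u, v ∈ u`. -/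
def br {n : ℕ} (L : Matrix (Fin (2*n)) (Fin (2*n)) ℝ) (x y : G n) : G n :=
  inn x (E n 0) • L.mulVec y - inn y (E n 0) • L.mulVec x

/-- `nabla` is the Levi-Civita connection of `⟨·,·⟩`, i.e. it satisfies the Koszul
formula `2⟨∇_x y, z⟩ = ⟨[x,y],z⟩ − ⟨[y,z],x⟩ + ⟨[z,x],y⟩`. -/
def Koszul {n : ℕ} (L : Matrix (Fin (2*n)) (Fin (2*n)) ℝ) (nabla : G n → G n → G n) : Prop :=
  ∀ x y z : G n, 2 * inn (nabla x y) z
    = inn (br L x y) z - inn (br L y z) x + inn (br L z x) y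

/-- `(∇_y J)(x) = ∇_y (Jx) − J ∇_y x`. -/
def covJ {n : ℕ} (nabla : G n → G n → G n) (y x : G n) : G n :=
  nabla y ((Jm n).mulVec x) - (Jm n).mulVec (nabla y x)

/-- The rough Laplacian
`(∇*∇J)(x) = Σ_i ((∇_{e_i}(∇_{e_i}J))(x) − (∇_{∇_{e_i}e_i} J)(x))`. -/
def roughLap {n : ℕ} (nabla : G n → G n → G n) (x : G n) : G n :=
  ∑ i : Fin (2*n),
    (nabla (E n i.val) (covJ nabla (E n i.val) x)
      - covJ nabla (E n i.val) (nabla (E n i.val) x)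
      - covJ nabla (nabla (E n i.val) (E n i.val)) x)

/-- `J` is harmonic: `J ∘ (∇*∇J) = (∇*∇J) ∘ J`. -/
def Harmonic {n : ℕ} (nabla : G n → G n → G n) : Prop :=
  ∀ x : G n, (Jm n).mulVec (roughLap nabla x) = roughLap nabla ((Jm n).mulVec x)

/-- Symmetric part of a matrix. -/
def symPart {n : ℕ} (M : Matrix (Fin (2*n)) (Fin (2*n)) ℝ) :
    Matrix (Fin (2*n)) (Fin (2*n)) ℝ := (1/2 : ℝ) • (M + Mᵀ)

/-- Skew-symmetric part of a matrix. -/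
def skewPart {n : ℕ} (M : Matrix (Fin (2*n)) (Fin (2*n)) ℝ) :
    Matrix (Fin (2*n)) (Fin (2*n)) ℝ := (1/2 : ℝ) • (M - Mᵀ)

/-- `γ = (v₀ + w₀)/2`. -/
def gam {n : ℕ} (v₀ w₀ : G n) : G n := (1/2 : ℝ) • (v₀ + w₀)

/-- `ρ = (v₀ − w₀)/2`. -/
def rho {n : ℕ} (v₀ w₀ : G n) : G n := (1/2 : ℝ) • (v₀ - w₀)

/-- The fundamental 2-form `ω(x,y) = ⟨Jx, y⟩`. -/
def om {n : ℕ} (x y : G n) : ℝ := inn ((Jm n).mulVec x) y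

/-- `(∇_x ω)(y,z) = −ω(∇_x y, z) − ω(y, ∇_x z)`. -/
def nablaOm {n : ℕ} (nabla : G n → G n → G n) (x y z : G n) : ℝ :=
  - om (nabla x y) z - om y (nabla x z)

/-- `dω(x,y,z) = −ω([x,y],z) − ω([y,z],x) − ω([z,x],y)`. -/
def dOm {n : ℕ} (L : Matrix (Fin (2*n)) (Fin (2*n)) ℝ) (x y z : G n) : ℝ :=
  - om (br L x y) z - om (br L y z) x - om (br L z x) y

/-- The codifferential `δω(x) = −Σ_i (∇_{e_i}ω)(e_i, x)`. -/
def deltaOm {n : ℕ} (nabla : G n → G n → G n) (x : G n) : ℝ :=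
  - ∑ i : Fin (2*n), nablaOm nabla (E n i.val) (E n i.val) x

/-- The Nijenhuis tensor `N(x,y) = [x,y] + J([Jx,y] + [x,Jy]) − [Jx,Jy]`. -/
def Nij {n : ℕ} (L : Matrix (Fin (2*n)) (Fin (2*n)) ℝ) (x y : G n) : G n :=
  br L x y
    + (Jm n).mulVec (br L ((Jm n).mulVec x) y + br L x ((Jm n).mulVec y))
    - br L ((Jm n).mulVec x) ((Jm n).mulVec y)

/-- `T⁻(x,y,z) = (∇_x ω)(y,z) − (∇_{Jx} ω)(Jy,z)`. -/
def Tminus {n : ℕ} (nabla : G n → G n → G n) (x y z : G n) : ℝ :=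
  nablaOm nabla x y z - nablaOm nabla ((Jm n).mulVec x) ((Jm n).mulVec y) z

/-- `T⁺(x,y,z) = (∇_x ω)(y,z) + (∇_{Jx} ω)(Jy,z)`. -/
def Tplus {n : ℕ} (nabla : G n → G n → G n) (x y z : G n) : ℝ :=
  nablaOm nabla x y z + nablaOm nabla ((Jm n).mulVec x) ((Jm n).mulVec y) z

/-- `U(x,y,z) = ⟨x,y⟩δω(z) − ⟨x,z⟩δω(y) − ⟨x,Jy⟩δω(Jz) + ⟨x,Jz⟩δω(Jy)`. -/
def Uten {n : ℕ} (nabla : G n → G n → G n) (x y z : G n) : ℝ :=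
  inn x y * deltaOm nabla z - inn x z * deltaOm nabla y
    - inn x ((Jm n).mulVec y) * deltaOm nabla ((Jm n).mulVec z)
    + inn x ((Jm n).mulVec z) * deltaOm nabla ((Jm n).mulVec y)

/-- The Lee form `θ(x) = −(1/(n−1)) δω(Jx)`. -/
def Lee {n : ℕ} (nabla : G n → G n → G n) (x : G n) : ℝ :=
  -(1/((n : ℝ) - 1)) * deltaOm nabla ((Jm n).mulVec x)

/-- The identity of `a`, extended by zero to `g`. -/
def Ia (n : ℕ) : Matrix (Fin (2*n)) (Fin (2*n)) ℝ :=
  Matrix.of fun k l => if k = l ∧ 2 ≤ (k : ℕ) then (1 : ℝ) else 0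

/-!
With `ℓ(x) = ⟨x, e₀⟩` the bracket is `[x, y] = ℓ(x) L y - ℓ(y) L x`, and expanding the Nijenhuis
tensor with `J² = -1` gives, for `M = L + J L J` (which anticommutes with `J`),
`N(x, y) = ℓ(x) M y + ℓ(Jx) J M y - ℓ(y) M x - ℓ(Jy) J M x`.
Hence `N(e₀, y) = M y` for `y ∈ a`; conversely, if `M` vanishes on `a` then, since
`g = ℝe₀ ⊕ ℝJe₀ ⊕ a`, `M x = ℓ(x) m + ℓ(Jx) J m` with `m = M e₀`, and `N` vanishes identically.
So `N = 0` iff `M` vanishes on `a`, and for `y ∈ a`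
`M y = ⟨w₀, y⟩ e₁ - ⟨w₀, Jy⟩ e₀ + (D y + J D J y)`: the `e₁`-component at `y = w₀` forces `w₀ = 0`,
and the `a`-component is `-J (D J - J D) y`.
-/

section

variable {n : ℕ}

lemma inn_E (x : G n) {m : ℕ} (hm : m < 2 * n) : inn x (E n m) = x ⟨m, hm⟩ := by
  rw [inn, Finset.sum_eq_single_of_mem ⟨m, hm⟩ (Finset.mem_univ _)]
  · simp [E]
  · intro l _ hl
    simp [E, Fin.ext_iff.not.mp hl]

lemma eq_zero_of_inn_self_eq_zero {x : G n} (h : inn x x = 0) : x = 0 := by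
  funext i
  have := (Finset.sum_eq_zero_iff_of_nonneg fun i _ => mul_self_nonneg (x i)).1 h i
    (Finset.mem_univ _)
  simpa using this

lemma Even.add_one_lt_two_mul {k : Fin (2 * n)} (hk : Even (k : ℕ)) : (k : ℕ) + 1 < 2 * n := by
  obtain ⟨r, hr⟩ := hk
  omega

lemma Jm_mulVec_apply_of_even (x : G n) {k : Fin (2 * n)} (hk : Even (k : ℕ)) :
    (Jm n *ᵥ x) k = -x ⟨k + 1, hk.add_one_lt_two_mul⟩ := by
  rw [mulVec, dotProduct, Finset.sum_eq_single_of_mem ⟨k + 1, hk.add_one_lt_two_mul⟩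
    (Finset.mem_univ _)]
  · simp [Jm, hk]
  · intro l _ hl
    have hl' : (l : ℕ) ≠ k + 1 := fun h => hl (Fin.ext h)
    obtain ⟨r, hr⟩ := hk
    simp only [Jm, of_apply]
    split_ifs with h1 h2
    · obtain ⟨h, s, hs⟩ := h1
      omega
    · exact absurd h2.1 hl'
    · exact zero_mul _

lemma Jm_mulVec_apply_add_one (x : G n) {k : Fin (2 * n)} (hk : Even (k : ℕ)) :
    (Jm n *ᵥ x) ⟨k + 1, hk.add_one_lt_two_mul⟩ = x k := by
  rw [mulVec, dotProduct, Finset.sum_eq_single_of_mem k (Finset.mem_univ _)]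
  · simp [Jm, hk]
  · intro l _ hl
    have hl' : (l : ℕ) ≠ k := fun h => hl (Fin.ext h)
    simp only [Jm, of_apply]
    split_ifs with h1 h2
    · exact absurd (by omega) hl'
    · exact absurd hk (Nat.even_add_one.mp h2.2)
    · exact zero_mul _

lemma Jm_mulVec_Jm_mulVec (x : G n) : Jm n *ᵥ (Jm n *ᵥ x) = -x := by
  funext k
  rcases Nat.even_or_odd (k : ℕ) with hk | ⟨j, hj⟩
  · rw [Jm_mulVec_apply_of_even _ hk, Jm_mulVec_apply_add_one _ hk, Pi.neg_apply]
  · have hj' : Even ((⟨2 * j, by omega⟩ : Fin (2 * n)) : ℕ) := even_two_mul j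
    rw [show k = ⟨2 * j + 1, hj'.add_one_lt_two_mul⟩ from Fin.ext hj,
      Jm_mulVec_apply_add_one _ hj', Jm_mulVec_apply_of_even _ hj', Pi.neg_apply]

lemma Jm_mulVec_apply_zero (hn : 0 < n) (x : G n) :
    (Jm n *ᵥ x) ⟨0, by omega⟩ = -x ⟨1, by omega⟩ :=
  Jm_mulVec_apply_of_even x (k := ⟨0, by omega⟩) Even.zero

lemma Jm_mulVec_apply_one (hn : 0 < n) (x : G n) :
    (Jm n *ᵥ x) ⟨1, by omega⟩ = x ⟨0, by omega⟩ :=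
  Jm_mulVec_apply_add_one x (k := ⟨0, by omega⟩) Even.zero

lemma E_eq_single {m : ℕ} (hm : m < 2 * n) : E n m = Pi.single ⟨m, hm⟩ 1 := by
  funext k
  simp [E, Pi.single_apply, Fin.ext_iff]

lemma Jm_mulVec_E_zero (hn : 0 < n) : Jm n *ᵥ E n 0 = E n 1 := by
  funext k
  rw [E_eq_single (by omega : 0 < 2 * n), mulVec_single_one]
  simp [Jm, E]

lemma inA_Jm_mulVec (hn : 0 < n) {x : G n} (hx : inA x) : inA (Jm n *ᵥ x) := by
  rintro ⟨i, hi⟩ hi2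
  interval_cases i
  · rw [Jm_mulVec_apply_zero hn, hx _ (by simp), neg_zero]
  · rw [Jm_mulVec_apply_one hn, hx _ (by simp)]

lemma inn_E_zero_of_inA (hn : 0 < n) {x : G n} (hx : inA x) : inn x (E n 0) = 0 := by
  rw [inn_E x (by omega), hx _ (by simp)]

lemma inA_sub_smul_E (hn : 0 < n) (x : G n) :
    inA (x - inn x (E n 0) • E n 0 + inn (Jm n *ᵥ x) (E n 0) • E n 1) := by
  rintro ⟨i, hi⟩ hi2
  rw [inn_E _ (by omega), inn_E _ (by omega), Jm_mulVec_apply_zero hn]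
  interval_cases i <;> simp [E]

section Nijenhuis

variable (L : Matrix (Fin (2 * n)) (Fin (2 * n)) ℝ)

def nijMat : Matrix (Fin (2 * n)) (Fin (2 * n)) ℝ := L + Jm n * L * Jm n

lemma nijMat_mulVec (y : G n) : nijMat L *ᵥ y = L *ᵥ y + Jm n *ᵥ (L *ᵥ (Jm n *ᵥ y)) := by
  rw [nijMat, add_mulVec, Matrix.mul_assoc, ← mulVec_mulVec, ← mulVec_mulVec]

lemma nijMat_mulVec_Jm_mulVec (y : G n) :
    nijMat L *ᵥ (Jm n *ᵥ y) = -(Jm n *ᵥ (nijMat L *ᵥ y)) := by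
  simp only [nijMat_mulVec, Jm_mulVec_Jm_mulVec, mulVec_add, mulVec_neg]
  abel

lemma Nij_eq (x y : G n) :
    Nij L x y = inn x (E n 0) • nijMat L *ᵥ y + inn (Jm n *ᵥ x) (E n 0) • (Jm n *ᵥ (nijMat L *ᵥ y))
      - inn y (E n 0) • nijMat L *ᵥ x - inn (Jm n *ᵥ y) (E n 0) • (Jm n *ᵥ (nijMat L *ᵥ x)) := by
  simp only [Nij, br, nijMat_mulVec, mulVec_add, mulVec_sub, mulVec_smul, Jm_mulVec_Jm_mulVec]
  module

lemma nijMat_mulVec_eq_of_inA (hn : 0 < n) (hM : ∀ y, inA y → nijMat L *ᵥ y = 0) (x : G n) :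
    nijMat L *ᵥ x = inn x (E n 0) • nijMat L *ᵥ E n 0
      + inn (Jm n *ᵥ x) (E n 0) • (Jm n *ᵥ (nijMat L *ᵥ E n 0)) := by
  have hz := hM _ (inA_sub_smul_E hn x)
  rw [← Jm_mulVec_E_zero hn, mulVec_add, mulVec_sub, mulVec_smul, mulVec_smul,
    nijMat_mulVec_Jm_mulVec] at hz
  linear_combination (norm := module) hz

theorem Nij_eq_zero_iff (hn : 0 < n) :
    (∀ x y, Nij L x y = 0) ↔ ∀ y, inA y → nijMat L *ᵥ y = 0 := by
  constructor
  · intro hN y hy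
    have h := hN (E n 0) y
    rw [Nij_eq, Jm_mulVec_E_zero hn, inn_E_zero_of_inA hn hy,
      inn_E_zero_of_inA hn (inA_Jm_mulVec hn hy), inn_E _ (by omega), inn_E _ (by omega)] at h
    simpa [E] using h
  · intro hM x y
    rw [Nij_eq, nijMat_mulVec_eq_of_inA L hn hM x, nijMat_mulVec_eq_of_inA L hn hM y]
    simp only [mulVec_add, mulVec_smul, Jm_mulVec_Jm_mulVec]
    module

end Nijenhuis

section AlmostAbelian

variable {μ : ℝ} {v₀ w₀ : G n} {D : Matrix (Fin (2 * n)) (Fin (2 * n)) ℝ}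

lemma inA_mulVec_of_DinA (hD : DinA D) (x : G n) : inA (D *ᵥ x) := by
  intro i hi
  simp only [mulVec, dotProduct]
  exact Finset.sum_eq_zero fun l _ => by rw [hD i l (Or.inl hi), zero_mul]

lemma Lm_mulVec_of_inA {y : G n} (hy : inA y) :
    Lm μ v₀ w₀ D *ᵥ y = inn w₀ y • E n 1 + D *ᵥ y := by
  have hy1 {c : ℝ} (l : Fin (2 * n)) {p : Prop} [Decidable p] (hp : p → (l : ℕ) = 1) :
      (if p then c else 0) * y l = 0 := by
    split_ifs with h
    · rw [hy l (by have := hp h; omega), mul_zero]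
    · rw [zero_mul]
  funext k
  simp only [mulVec, dotProduct, Lm, of_apply, add_mul, Finset.sum_add_distrib, Pi.add_apply,
    Pi.smul_apply, smul_eq_mul, E, inn]
  rw [Finset.sum_eq_zero fun l _ => hy1 l And.right, Finset.sum_eq_zero fun l _ => hy1 l id]
  split_ifs <;> simp

lemma nijMat_Lm_mulVec_of_inA (hn : 0 < n) {y : G n} (hy : inA y) :
    nijMat (Lm μ v₀ w₀ D) *ᵥ y = inn w₀ y • E n 1 - inn w₀ (Jm n *ᵥ y) • E n 0
      + (D *ᵥ y + Jm n *ᵥ (D *ᵥ (Jm n *ᵥ y))) := by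
  rw [nijMat_mulVec, Lm_mulVec_of_inA hy, Lm_mulVec_of_inA (inA_Jm_mulVec hn hy),
    mulVec_add, mulVec_smul, ← Jm_mulVec_E_zero hn, Jm_mulVec_Jm_mulVec]
  module

lemma inn_eq_zero_of_nijMat_Lm_mulVec_eq_zero (hn : 0 < n) (hD : DinA D) {y : G n}
    (hy : inA y) (h : nijMat (Lm μ v₀ w₀ D) *ᵥ y = 0) : inn w₀ y = 0 := by
  have h1 := congrFun h ⟨1, by omega⟩
  rw [nijMat_Lm_mulVec_of_inA hn hy, Pi.add_apply, Pi.add_apply,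
    inA_mulVec_of_DinA hD y _ (by simp),
    inA_Jm_mulVec hn (inA_mulVec_of_DinA hD _) _ (by simp)] at h1
  simpa [E] using h1

end AlmostAbelian

end

theorem statement10_general (n : ℕ) (hn : 2 ≤ n) (μ : ℝ) (v₀ w₀ : G n) (hw : inA w₀)
    (D : Matrix (Fin (2*n)) (Fin (2*n)) ℝ) (hD : DinA D) :
    (∀ x y : G n, Nij (Lm μ v₀ w₀ D) x y = 0)
      ↔ (w₀ = 0 ∧ (∀ x : G n, inA x → (D).mulVec ((Jm n).mulVec x) = (Jm n).mulVec ((D).mulVec x))) := by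
  have hn₀ : 0 < n := by omega
  rw [Nij_eq_zero_iff _ hn₀]
  constructor
  · intro hM
    obtain rfl : w₀ = 0 := eq_zero_of_inn_self_eq_zero
      (inn_eq_zero_of_nijMat_Lm_mulVec_eq_zero hn₀ hD hw (hM w₀ hw))
    refine ⟨rfl, fun y hy => ?_⟩
    have h := congrArg (Jm n *ᵥ ·) (hM y hy)
    simp only [nijMat_Lm_mulVec_of_inA hn₀ hy, inn, Pi.zero_apply, zero_mul,
      Finset.sum_const_zero, zero_smul, sub_zero, zero_add, mulVec_add, Jm_mulVec_Jm_mulVec,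
      mulVec_zero] at h
    exact (add_neg_eq_zero.mp h).symm
  · rintro ⟨rfl, hcomm⟩ y hy
    rw [nijMat_Lm_mulVec_of_inA hn₀ hy, hcomm y hy, Jm_mulVec_Jm_mulVec]
    simp [inn]

/-- `N = 0` (`J` integrable; Hermitian, class `W₃⊕W₄`) iff `w₀ = 0`
and `D J' = J' D`. -/
theorem statement10 (n : ℕ) (hn : 2 ≤ n) (μ : ℝ) (v₀ w₀ : G n) (hv : inA v₀) (hw : inA w₀)
    (D : Matrix (Fin (2*n)) (Fin (2*n)) ℝ) (hD : DinA D) :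
    (∀ x y : G n, Nij (Lm μ v₀ w₀ D) x y = 0)
      ↔ (w₀ = 0 ∧ (∀ x : G n, inA x → (D).mulVec ((Jm n).mulVec x) = (Jm n).mulVec ((D).mulVec x))) :=
  statement10_general n hn μ v₀ w₀ hw D hD
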